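/- arXiv:2204.11694 — 2 statements merged into one kernel-verified Lean document; each statement's English description precedes it below -/
import Mathlib

section
/- There is no finitely additive probability measure μ on the power set of ω such that μ vanishes on all finite sets and μ(A) > 0 for every infinite A ⊆ ω. -/
/-!
Repeatedly splitting an infinite set into two infinite halves and keeping the half of smaller
measure gives a decreasing sequence of infinite sets `A n` with `μ (A n) ≤ 2⁻ⁿ`. An infinite
pseudo-intersection `D` of this sequence differs from each `A n` by a finite, hence null, set,
so `μ D ≤ 2⁻ⁿ` for every `n`, and `μ D = 0` although `D` is infinite.
-/

open Filter

theorem Set.Infinite.exists_union_eq_infinite_infinite {α : Type*} {s : Set α}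
    (hs : s.Infinite) : ∃ t u : Set α, t ∪ u = s ∧ Disjoint t u ∧ t.Infinite ∧ u.Infinite := by
  obtain ⟨t, u, htu, hdisj, hcard⟩ := hs.exists_union_disjoint_cardinal_eq_of_infinite
  have ht : t.Infinite := by
    intro ht
    have hu : u.Finite := Cardinal.lt_aleph0_iff_set_finite.mp
      (hcard ▸ Cardinal.lt_aleph0_iff_set_finite.mpr ht)
    exact hs (htu ▸ ht.union hu)
  have hu : u.Infinite := fun hu => ht <| Cardinal.lt_aleph0_iff_set_finite.mp
    (hcard.symm ▸ Cardinal.lt_aleph0_iff_set_finite.mpr hu)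
  exact ⟨t, u, htu, hdisj, ht, hu⟩

theorem Nat.exists_infinite_sdiff_finite_of_antitone {A : ℕ → Set ℕ} (hA : Antitone A)
    (hinf : ∀ n, (A n).Infinite) : ∃ D : Set ℕ, D.Infinite ∧ ∀ n, (D \ A n).Finite := by
  obtain ⟨φ, hφ, hφA⟩ := extraction_forall_of_frequently fun n =>
    Nat.frequently_atTop_iff_infinite.mpr (hinf n)
  refine ⟨Set.range φ, Set.infinite_range_of_injective hφ.injective, fun n => ?_⟩
  refine ((Set.finite_Iio n).image φ).subset ?_
  rintro _ ⟨⟨k, rfl⟩, hk⟩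
  refine ⟨k, Set.mem_Iio.mpr ?_, rfl⟩
  by_contra hnk
  exact hk (hA (not_lt.mp hnk) (hφA k))

def IsFinitelyAdditive {α : Type*} (μ : Set α → ℝ) : Prop :=
  ∀ A B : Set α, Disjoint A B → μ (A ∪ B) = μ A + μ B

namespace IsFinitelyAdditive

variable {α : Type*} {μ : Set α → ℝ}

theorem apply_eq_add_sdiff (hμ : IsFinitelyAdditive μ) {A B : Set α} (h : A ⊆ B) :
    μ B = μ A + μ (B \ A) := by
  rw [← hμ A (B \ A) disjoint_sdiff_self_right, Set.union_sdiff_cancel h]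

theorem mono (hμ : IsFinitelyAdditive μ) (hpos : ∀ A, 0 ≤ μ A) {A B : Set α} (h : A ⊆ B) :
    μ A ≤ μ B := by
  linarith [hμ.apply_eq_add_sdiff h, hpos (B \ A)]

theorem apply_le_of_sdiff_finite (hμ : IsFinitelyAdditive μ) (hpos : ∀ A, 0 ≤ μ A)
    (hfin : ∀ A : Set α, A.Finite → μ A = 0) {A D : Set α} (hD : (D \ A).Finite) :
    μ D ≤ μ A := by
  have hsplit : μ D = μ (D ∩ A) + μ (D \ A) := by
    rw [← hμ _ _ (Set.disjoint_sdiff_inter.symm), Set.inter_union_sdiff]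
  rw [hsplit, hfin _ hD, add_zero]
  exact hμ.mono hpos Set.inter_subset_right

theorem exists_infinite_subset_le_half (hμ : IsFinitelyAdditive μ) {A : Set α}
    (hA : A.Infinite) : ∃ B ⊆ A, B.Infinite ∧ μ B ≤ μ A / 2 := by
  obtain ⟨t, u, rfl, hdisj, ht, hu⟩ := hA.exists_union_eq_infinite_infinite
  rw [hμ t u hdisj]
  rcases le_total (μ t) (μ u) with h | h
  · exact ⟨t, Set.subset_union_left, ht, by linarith⟩
  · exact ⟨u, Set.subset_union_right, hu, by linarith⟩

theorem exists_antitone_infinite_le_div_pow (hμ : IsFinitelyAdditive μ) [Infinite α] :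
    ∃ A : ℕ → Set α, Antitone A ∧ (∀ n, (A n).Infinite) ∧
      ∀ n, μ (A n) ≤ μ Set.univ / 2 ^ n := by
  choose F hFsub hFinf hFle using fun A : {A : Set α // A.Infinite} =>
    hμ.exists_infinite_subset_le_half A.2
  let G : {A : Set α // A.Infinite} → {A : Set α // A.Infinite} := fun A => ⟨F A, hFinf A⟩
  let A : ℕ → {A : Set α // A.Infinite} := fun n => G^[n] ⟨Set.univ, Set.infinite_univ⟩
  have hsucc (n : ℕ) : A (n + 1) = G (A n) := Function.iterate_succ_apply' G n _
  refine ⟨fun n => (A n).1, antitone_nat_of_succ_le fun n => ?_, fun n => (A n).2, fun n => ?_⟩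
  · rw [hsucc]
    exact hFsub _
  · induction n with
    | zero => simp [A]
    | succ n ih =>
      dsimp only at ih ⊢
      rw [hsucc, pow_succ, ← div_div]
      exact (hFle _).trans (by linarith)

end IsFinitelyAdditive

theorem stmt1 :
    ¬ ∃ μ : Set ℕ → ℝ,
      (∀ A B : Set ℕ, Disjoint A B → μ (A ∪ B) = μ A + μ B) ∧
      (∀ A : Set ℕ, 0 ≤ μ A) ∧
      μ Set.univ = 1 ∧
      (∀ A : Set ℕ, A.Finite → μ A = 0) ∧
      (∀ A : Set ℕ, A.Infinite → 0 < μ A) := by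
  rintro ⟨μ, hadd, hpos, huniv, hfin, hinf⟩
  have hμ : IsFinitelyAdditive μ := hadd
  obtain ⟨A, hanti, hAinf, hAle⟩ := hμ.exists_antitone_infinite_le_div_pow
  obtain ⟨D, hDinf, hDA⟩ := Nat.exists_infinite_sdiff_finite_of_antitone hanti hAinf
  obtain ⟨n, hn⟩ := exists_pow_lt_of_lt_one (hinf D hDinf) one_half_lt_one
  have hDle : μ D ≤ (1 / 2) ^ n := by
    rw [one_div_pow, ← huniv]
    exact (hμ.apply_le_of_sdiff_finite hpos hfin (hDA n)).trans (hAle n)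
  exact hn.not_ge hDle
end

section
/- Let μ be a P-measure on ω and let x be a nonprincipal ultrafilter on ω such that the Radon extension of μ to βω satisfies μ̌({x}) > 0; equivalently, δ := inf{μ(A) : A ∈ x} > 0. Then x is a P-point: for every sequence (A_n) of elements of x decreasing to ∅ there exists B ∈ x with B ⊆* A_n for every n. -/
/-!
Take a pseudointersection `B` of the `A n` with `μ (A n) → μ B`. Since each `B \ A n` is finite,
hence null, `μ (A n \ B) = μ (A n) - μ B → 0`. If `B` were not in `x`, then every `A n \ B` would be
in `x` and so have measure at least `δ > 0`; hence `B ∈ x`.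
-/

open Filter Topology

section FinitelyAdditive

variable {α : Type*} {μ : Set α → ℝ}
  (hadd : ∀ A B : Set α, Disjoint A B → μ (A ∪ B) = μ A + μ B)
include hadd

lemma measure_empty_of_additive : μ ∅ = 0 := by
  have h := hadd ∅ ∅ disjoint_bot_left
  rw [Set.empty_union] at h
  linarith

lemma measure_diff_add_inter (A B : Set α) : μ (A \ B) + μ (A ∩ B) = μ A := by
  rw [← hadd _ _ Set.disjoint_sdiff_inter, Set.sdiff_union_inter]

lemma measure_eq_zero_of_finite (hpoints : ∀ a : α, μ {a} = 0) {s : Set α} (hs : s.Finite) :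
    μ s = 0 := by
  induction s, hs using Set.Finite.induction_on with
  | empty => exact measure_empty_of_additive hadd
  | @insert a s ha _ ih =>
    rw [Set.insert_eq, hadd _ _ (Set.disjoint_singleton_left.mpr ha), hpoints, ih, add_zero]

lemma measure_diff_eq_sub_of_finite_diff (hpoints : ∀ a : α, μ {a} = 0) {A B : Set α}
    (hBA : (B \ A).Finite) : μ (A \ B) = μ A - μ B := by
  have hAB := measure_diff_add_inter hadd A B
  have hBA' := measure_diff_add_inter hadd B A
  rw [measure_eq_zero_of_finite hadd hpoints hBA, Set.inter_comm] at hBA'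
  linarith

lemma mem_ultrafilter_of_tendsto_measure (hpoints : ∀ a : α, μ {a} = 0) {x : Ultrafilter α}
    {δ : ℝ} (hδ : 0 < δ) (hδx : ∀ A ∈ x, δ ≤ μ A) {A : ℕ → Set α} (hAx : ∀ n, A n ∈ x)
    {B : Set α} (hBA : ∀ n, (B \ A n).Finite)
    (hlim : Tendsto (fun n => μ (A n)) atTop (𝓝 (μ B))) : B ∈ x := by
  by_contra hB
  have hdiff_mem : ∀ n, A n \ B ∈ x := fun n =>
    (x : Filter α).inter_sets (hAx n) (Ultrafilter.compl_mem_iff_notMem.mpr hB)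
  have hdiff_tendsto : Tendsto (fun n => μ (A n \ B)) atTop (𝓝 0) := by
    simpa only [sub_self, measure_diff_eq_sub_of_finite_diff hadd hpoints (hBA _)] using
      hlim.sub_const (μ B)
  have : δ ≤ 0 := ge_of_tendsto' hdiff_tendsto fun n => hδx _ (hdiff_mem n)
  linarith

end FinitelyAdditive

theorem stmt5_general (μ : Set ℕ → ℝ)
    (hadd : ∀ A B : Set ℕ, Disjoint A B → μ (A ∪ B) = μ A + μ B)
    (hpoints : ∀ n : ℕ, μ {n} = 0)
    (hP : ∀ A : ℕ → Set ℕ, (∀ n, A (n + 1) ⊆ A n) →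
      ∃ B : Set ℕ, (∀ n, (B \ A n).Finite) ∧
        Filter.Tendsto (fun n => μ (A n)) Filter.atTop (nhds (μ B)))
    (x : Ultrafilter ℕ)
    (δ : ℝ) (hδ : 0 < δ) (hδx : ∀ A ∈ x, δ ≤ μ A) :
    ∀ A : ℕ → Set ℕ, (∀ n, A n ∈ x) → (∀ n, A (n + 1) ⊆ A n) → (⋂ n, A n) = ∅ →
      ∃ B ∈ x, ∀ n, (B \ A n).Finite := by
  intro A hAx hAmono _
  obtain ⟨B, hBA, hlim⟩ := hP A hAmono
  exact ⟨B, mem_ultrafilter_of_tendsto_measure hadd hpoints hδ hδx hAx hBA hlim, hBA⟩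

theorem stmt5 (μ : Set ℕ → ℝ)
    (hadd : ∀ A B : Set ℕ, Disjoint A B → μ (A ∪ B) = μ A + μ B)
    (hnonneg : ∀ A : Set ℕ, 0 ≤ μ A)
    (hprob : μ Set.univ = 1)
    (hpoints : ∀ n : ℕ, μ {n} = 0)
    (hP : ∀ A : ℕ → Set ℕ, (∀ n, A (n + 1) ⊆ A n) →
      ∃ B : Set ℕ, (∀ n, (B \ A n).Finite) ∧
        Filter.Tendsto (fun n => μ (A n)) Filter.atTop (nhds (μ B)))
    (x : Ultrafilter ℕ) (hfree : ∀ A : Set ℕ, A.Finite → A ∉ x)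
    (δ : ℝ) (hδ : 0 < δ) (hδx : ∀ A ∈ x, δ ≤ μ A) :
    ∀ A : ℕ → Set ℕ, (∀ n, A n ∈ x) → (∀ n, A (n + 1) ⊆ A n) → (⋂ n, A n) = ∅ →
      ∃ B ∈ x, ∀ n, (B \ A n).Finite :=
  stmt5_general μ hadd hpoints hP x δ hδ hδx
end
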